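/- Let s₁, s₂ ∈ (0,1) and p, q ∈ (1,∞). If λ ∈ ℝ satisfies λ ≤ λ₁(s₂,q) and λ ≠ 0, then λ is not an eigenvalue of problem (1.1); that is, there is no u ∈ X_{s₁,p} ∩ X_{s₂,q}, not almost everywhere equal to 0, satisfying ℰ_{s₁,p}(u,v) + ℰ_{s₂,q}(u,v) = λ ∫_Ω |u|^{q−2} u v dx for all v ∈ X_{s₁,p} ∩ X_{s₂,q}. -/

import Mathlib

open MeasureTheory Filter Topology
open scoped ENNReal

noncomputable section

/-- `ℝ^N` with the Euclidean norm. -/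
abbrev Euc (N : ℕ) : Type := EuclideanSpace ℝ (Fin N)

/-- The region `Q = (ℝ^N × ℝ^N) \ (Ωᶜ × Ωᶜ)`. -/
def Qset {N : ℕ} (Ω : Set (Euc N)) : Set (Euc N × Euc N) :=
  {z | z.1 ∈ Ω ∨ z.2 ∈ Ω}

/-- The Gagliardo energy `[u]_{s,r}^r = ∬_Q |u(x)-u(y)|^r / |x-y|^{N+sr} dx dy`,
as an extended nonnegative real. -/
def gagliardo {N : ℕ} (Ω : Set (Euc N)) (s r : ℝ) (u : Euc N → ℝ) : ℝ≥0∞ :=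
  ∫⁻ z in Qset Ω, ENNReal.ofReal (|u z.1 - u z.2| ^ r / ‖z.1 - z.2‖ ^ ((N : ℝ) + s * r))

/-- Membership in the fractional Sobolev space `X_{s,r}`. -/
def memX {N : ℕ} (Ω : Set (Euc N)) (s r : ℝ) (u : Euc N → ℝ) : Prop :=
  Measurable u ∧ (∫⁻ x in Ω, ENNReal.ofReal (|u x| ^ r)) + gagliardo Ω s r u < ⊤

/-- `[u]_{s,r}^r` as a real number. -/
def semiPow {N : ℕ} (Ω : Set (Euc N)) (s r : ℝ) (u : Euc N → ℝ) : ℝ :=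
  (gagliardo Ω s r u).toReal

/-- The Gagliardo seminorm `[u]_{s,r}`. -/
def gNorm {N : ℕ} (Ω : Set (Euc N)) (s r : ℝ) (u : Euc N → ℝ) : ℝ :=
  semiPow Ω s r u ^ (1 / r)

/-- The norm `‖u‖_{s,r} = ( ∫_Ω |u|^r + [u]_{s,r}^r )^{1/r}`. -/
def normX {N : ℕ} (Ω : Set (Euc N)) (s r : ℝ) (u : Euc N → ℝ) : ℝ :=
  ((∫ x in Ω, |u x| ^ r) + semiPow Ω s r u) ^ (1 / r)

/-- The form `ℰ_{s,r}(u,v)`. -/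
def energyForm {N : ℕ} (Ω : Set (Euc N)) (s r : ℝ) (u v : Euc N → ℝ) : ℝ :=
  ∫ z in Qset Ω,
    (|u z.1 - u z.2| ^ (r - 2) * (u z.1 - u z.2) * (v z.1 - v z.2)) /
      ‖z.1 - z.2‖ ^ ((N : ℝ) + s * r)

/-- `λ₁(s₂,q) = inf { [u]_{s₂,q}^q : u ∈ 𝒞_{s₂,q}, ∫_Ω |u|^q = 1 }`. -/
def lam1 {N : ℕ} (Ω : Set (Euc N)) (s₂ q : ℝ) : ℝ :=
  sInf {t : ℝ | ∃ u : Euc N → ℝ, memX Ω s₂ q u ∧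
    (∫ x in Ω, |u x| ^ (q - 2) * u x) = 0 ∧ (∫ x in Ω, |u x| ^ q) = 1 ∧
    t = semiPow Ω s₂ q u}

/-- `lam` is an eigenvalue of the fractional `q`-Neumann problem. -/
def IsEigenQ {N : ℕ} (Ω : Set (Euc N)) (s₂ q lam : ℝ) : Prop :=
  ∃ u : Euc N → ℝ, memX Ω s₂ q u ∧ ¬ (u =ᵐ[volume] fun _ => (0 : ℝ)) ∧
    ∀ v : Euc N → ℝ, memX Ω s₂ q v →
      energyForm Ω s₂ q u v = lam * ∫ x in Ω, |u x| ^ (q - 2) * u x * v x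

/-- `lam` is an eigenvalue of problem (1.1). -/
def IsEigen11 {N : ℕ} (Ω : Set (Euc N)) (s₁ s₂ p q lam : ℝ) : Prop :=
  ∃ u : Euc N → ℝ, memX Ω s₁ p u ∧ memX Ω s₂ q u ∧ ¬ (u =ᵐ[volume] fun _ => (0 : ℝ)) ∧
    ∀ v : Euc N → ℝ, memX Ω s₁ p v → memX Ω s₂ q v →
      energyForm Ω s₁ p u v + energyForm Ω s₂ q u v
        = lam * ∫ x in Ω, |u x| ^ (q - 2) * u x * v x

/-- Compactness of the embedding `X_{s,r} ↪ L^r(Ω)`. -/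
def CompactEmbed {N : ℕ} (Ω : Set (Euc N)) (s r : ℝ) : Prop :=
  ∀ u : ℕ → Euc N → ℝ, (∀ n, memX Ω s r (u n)) →
    (∃ B : ℝ, ∀ n, normX Ω s r (u n) ≤ B) →
    ∃ φ : ℕ → ℕ, StrictMono φ ∧ ∃ w : Euc N → ℝ,
      Tendsto (fun n => ∫⁻ x in Ω, ENNReal.ofReal (|u (φ n) x - w x| ^ r))
        atTop (nhds 0)

/-- The energy functional `F_λ`. -/
def Ffun {N : ℕ} (Ω : Set (Euc N)) (s₁ s₂ p q lam : ℝ) (u : Euc N → ℝ) : ℝ :=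
  (1 / p) * semiPow Ω s₁ p u + (1 / q) * semiPow Ω s₂ q u - (lam / q) * ∫ x in Ω, |u x| ^ q

/-- The Nehari set `N_λ`. -/
def Nehari {N : ℕ} (Ω : Set (Euc N)) (s₁ s₂ p q lam : ℝ) : Set (Euc N → ℝ) :=
  {u | memX Ω s₂ q u ∧ (∫ x in Ω, |u x| ^ (q - 2) * u x) = 0 ∧
    ¬ (u =ᵐ[volume] fun _ => (0 : ℝ)) ∧
    semiPow Ω s₁ p u + semiPow Ω s₂ q u = lam * ∫ x in Ω, |u x| ^ q}


namespace Stmt9Aux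

variable {N : ℕ} {Ω : Set (Euc N)} {s r : ℝ} {u : Euc N → ℝ}

lemma measurableSet_Qset (hΩ : MeasurableSet Ω) : MeasurableSet (Qset Ω) := by
  have : Qset Ω = (Prod.fst ⁻¹' Ω) ∪ (Prod.snd ⁻¹' Ω) := rfl
  rw [this]
  exact (measurable_fst hΩ).union (measurable_snd hΩ)

lemma meas_integrand (hu : Measurable u) (r α : ℝ) :
    Measurable (fun z : Euc N × Euc N => |u z.1 - u z.2| ^ r / ‖z.1 - z.2‖ ^ α) := by
  have h1 : Measurable fun z : Euc N × Euc N => |u z.1 - u z.2| ^ r :=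
    ((hu.comp measurable_fst).sub (hu.comp measurable_snd)).abs.pow measurable_const
  have h2 : Measurable fun z : Euc N × Euc N => ‖z.1 - z.2‖ ^ α :=
    (measurable_fst.sub measurable_snd).norm.pow measurable_const
  exact h1.div h2

lemma diag_null (hN : 0 < N) : (volume : Measure (Euc N × Euc N)) {z | z.1 = z.2} = 0 := by
  haveI : Nonempty (Fin N) := Fin.pos_iff_nonempty.mp hN
  haveI : Nontrivial (Euc N) := inferInstanceAs (Nontrivial (PiLp 2 fun _ : Fin N => ℝ))
  haveI : NullSingletonClass (volume : Measure (Euc N)) := inferInstance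
  have hD : MeasurableSet {z : Euc N × Euc N | z.1 = z.2} :=
    (isClosed_eq continuous_fst continuous_snd).measurableSet
  rw [MeasureTheory.Measure.volume_eq_prod, MeasureTheory.Measure.prod_apply hD]
  have : ∀ x : Euc N, (volume (Prod.mk x ⁻¹' {z : Euc N × Euc N | z.1 = z.2})) = 0 := by
    intro x
    have : Prod.mk x ⁻¹' {z : Euc N × Euc N | z.1 = z.2} = {x} := by
      ext y; simp [eq_comm]
    rw [this]
    exact measure_singleton x
  simp [this]

/-- If the Gagliardo energy vanishes, `u` is a.e. constant. -/
lemma ae_const_of_gag_zero (hN : 0 < N) (hΩo : IsOpen Ω) (hΩne : Ω.Nonempty)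
    (hu : Measurable u)
    (hg : gagliardo Ω s r u = 0) :
    ∃ c : ℝ, u =ᵐ[volume] fun _ => c := by
  set α : ℝ := (N : ℝ) + s * r
  set g : Euc N × Euc N → ℝ≥0∞ :=
    fun z => ENNReal.ofReal (|u z.1 - u z.2| ^ r / ‖z.1 - z.2‖ ^ α) with hgdef
  have hQ : MeasurableSet (Qset Ω) := measurableSet_Qset hΩo.measurableSet
  have hgm : Measurable g := ENNReal.measurable_ofReal.comp (meas_integrand hu r α)
  have h0 : g =ᵐ[volume.restrict (Qset Ω)] 0 :=
    (lintegral_eq_zero_iff hgm).mp hg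
  have h0' : ∀ᵐ z : Euc N × Euc N, z ∈ Qset Ω → g z = 0 :=
    (ae_restrict_iff' hQ).mp h0
  have hdiag : ∀ᵐ z : Euc N × Euc N, z.1 ≠ z.2 := by
    rw [ae_iff]
    simpa using diag_null (N := N) hN
  have key : ∀ᵐ z : Euc N × Euc N, z.1 ∈ Ω → u z.1 = u z.2 := by
    filter_upwards [h0', hdiag] with z hz hne hmem
    have hzQ : z ∈ Qset Ω := Or.inl hmem
    have hg0 : g z = 0 := hz hzQ
    have hnorm : 0 < ‖z.1 - z.2‖ := by
      rwa [norm_sub_pos_iff]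
    have hden : 0 < ‖z.1 - z.2‖ ^ α := Real.rpow_pos_of_pos hnorm α
    have : |u z.1 - u z.2| ^ r / ‖z.1 - z.2‖ ^ α ≤ 0 := by
      simpa [hgdef, ENNReal.ofReal_eq_zero] using hg0
    have hnum : |u z.1 - u z.2| ^ r ≤ 0 := by
      by_contra hcon
      push_neg at hcon
      exact absurd (div_pos hcon hden) (not_lt.mpr this)
    have : |u z.1 - u z.2| ^ r = 0 :=
      le_antisymm hnum (Real.rpow_nonneg (abs_nonneg _) r)
    have habs : |u z.1 - u z.2| = 0 := by
      by_contra hab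
      exact hab (by
        nlinarith [Real.rpow_pos_of_pos
          (lt_of_le_of_ne (abs_nonneg (u z.1 - u z.2)) (Ne.symm hab)) r])
    have := abs_eq_zero.mp habs
    linarith
  have hSm : MeasurableSet {z : Euc N × Euc N | z.1 ∈ Ω ∧ u z.1 ≠ u z.2} := by
    have h1 : MeasurableSet {z : Euc N × Euc N | z.1 ∈ Ω} := measurable_fst hΩo.measurableSet
    have h2 : MeasurableSet {z : Euc N × Euc N | u z.1 = u z.2} :=
      measurableSet_eq_fun (hu.comp measurable_fst) (hu.comp measurable_snd)
    exact h1.inter h2.compl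
  have hS0 : (volume : Measure (Euc N × Euc N)) {z | z.1 ∈ Ω ∧ u z.1 ≠ u z.2} = 0 := by
    rw [ae_iff] at key
    convert key using 2
    ext z
    simp [Classical.not_imp]
  rw [MeasureTheory.Measure.volume_eq_prod] at hS0
  have := (MeasureTheory.Measure.measure_prod_null (μ := volume) (ν := volume) hSm).mp hS0
  have hslice : ∀ᵐ x : Euc N, x ∈ Ω → volume {y : Euc N | u x ≠ u y} = 0 := by
    filter_upwards [this] with x hx hmem
    have : Prod.mk x ⁻¹' {z : Euc N × Euc N | z.1 ∈ Ω ∧ u z.1 ≠ u z.2}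
        = {y : Euc N | u x ≠ u y} := by
      ext y; simp [hmem]
    rw [← this]
    simpa using hx
  have hΩpos : 0 < volume Ω := hΩo.measure_pos volume hΩne
  obtain ⟨x₀, hx₀Ω, hx₀⟩ : ∃ x₀, x₀ ∈ Ω ∧ volume {y : Euc N | u x₀ ≠ u y} = 0 := by
    by_contra hcon
    push_neg at hcon
    have hsub : Ω ⊆ {x | ¬ (x ∈ Ω → volume {y : Euc N | u x ≠ u y} = 0)} := by
      intro x hx
      simp only [Set.mem_setOf_eq, Classical.not_imp]
      exact ⟨hx, hcon x hx⟩
    exact absurd (measure_mono_null hsub (ae_iff.mp hslice)) (ne_of_gt hΩpos)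
  refine ⟨u x₀, ?_⟩
  have : ∀ᵐ y : Euc N, u y = u x₀ := by
    rw [ae_iff]
    convert hx₀ using 2
    ext y
    simp [eq_comm, ne_comm]
  exact this

/-- constant functions lie in every `X_{s,r}`. -/
lemma memX_const (hΩo : IsOpen Ω) (hΩb : Bornology.IsBounded Ω) (hr : 0 < r) (c : ℝ) :
    memX Ω s r (fun _ => c) := by
  refine ⟨measurable_const, ?_⟩
  have h1 : gagliardo Ω s r (fun _ => c) = 0 := by
    unfold gagliardo
    simp [Real.zero_rpow hr.ne']
  have h2 : (∫⁻ x in Ω, ENNReal.ofReal (|c| ^ r)) = ENNReal.ofReal (|c| ^ r) * volume Ω :=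
    setLIntegral_const Ω _
  rw [h1, h2, add_zero]
  exact ENNReal.mul_lt_top ENNReal.ofReal_lt_top hΩb.measure_lt_top

lemma energyForm_const_right (u : Euc N → ℝ) (c : ℝ) :
    energyForm Ω s r u (fun _ => c) = 0 := by
  unfold energyForm
  simp

lemma abs_rpow_identity (d : ℝ) (hr : 1 < r) :
    |d| ^ (r - 2) * d * d = |d| ^ r := by
  rcases eq_or_ne d 0 with h | h
  · simp [h, Real.zero_rpow (by intro h'; rw [h'] at hr; norm_num at hr : r ≠ 0)]
  · have hd : 0 < |d| := abs_pos.mpr h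
    have h1 : |d| ^ (r - 2) * d * d = |d| ^ (r - 2) * |d| * |d| := by
      rw [mul_assoc, ← abs_mul_abs_self d, ← mul_assoc]
    have h2 : |d| ^ (r - 2 + 1 + 1) = |d| ^ (r - 2) * |d| * |d| := by
      rw [Real.rpow_add_one hd.ne', Real.rpow_add_one hd.ne']
    have h3 : r - 2 + 1 + 1 = r := by ring
    rw [h1, ← h2, h3]

lemma energyForm_self (hu : Measurable u) (hr : 1 < r) :
    energyForm Ω s r u u = semiPow Ω s r u := by
  unfold energyForm semiPow gagliardo
  set α : ℝ := (N : ℝ) + s * r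
  have hpt : ∀ z : Euc N × Euc N,
      |u z.1 - u z.2| ^ (r - 2) * (u z.1 - u z.2) * (u z.1 - u z.2) / ‖z.1 - z.2‖ ^ α
        = |u z.1 - u z.2| ^ r / ‖z.1 - z.2‖ ^ α := fun z => by
    rw [abs_rpow_identity _ hr]
  rw [integral_congr_ae (ae_of_all _ hpt),
    integral_eq_lintegral_of_nonneg_ae
      (ae_of_all _ fun z => div_nonneg (Real.rpow_nonneg (abs_nonneg _) r)
        (Real.rpow_nonneg (norm_nonneg _) α))
      (meas_integrand hu r α).aestronglyMeasurable]

lemma gagliardo_smul (hu : Measurable u) {c : ℝ} (hc : 0 < c) :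
    gagliardo Ω s r (fun x => c * u x) = ENNReal.ofReal (c ^ r) * gagliardo Ω s r u := by
  unfold gagliardo
  set α : ℝ := (N : ℝ) + s * r
  have hpt : ∀ z : Euc N × Euc N,
      ENNReal.ofReal (|c * u z.1 - c * u z.2| ^ r / ‖z.1 - z.2‖ ^ α)
        = ENNReal.ofReal (c ^ r) * ENNReal.ofReal (|u z.1 - u z.2| ^ r / ‖z.1 - z.2‖ ^ α) := by
    intro z
    rw [show c * u z.1 - c * u z.2 = c * (u z.1 - u z.2) by ring, abs_mul, abs_of_pos hc,
      Real.mul_rpow hc.le (abs_nonneg _), mul_div_assoc,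
      ENNReal.ofReal_mul (Real.rpow_nonneg hc.le r)]
  simp_rw [hpt]
  exact lintegral_const_mul _ (ENNReal.measurable_ofReal.comp (meas_integrand hu r α))

lemma lint_smul (hu : Measurable u) {c : ℝ} (hc : 0 < c) :
    (∫⁻ x in Ω, ENNReal.ofReal (|c * u x| ^ r))
      = ENNReal.ofReal (c ^ r) * ∫⁻ x in Ω, ENNReal.ofReal (|u x| ^ r) := by
  have hpt : ∀ x : Euc N,
      ENNReal.ofReal (|c * u x| ^ r)
        = ENNReal.ofReal (c ^ r) * ENNReal.ofReal (|u x| ^ r) := by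
    intro x
    rw [abs_mul, abs_of_pos hc, Real.mul_rpow hc.le (abs_nonneg _),
      ENNReal.ofReal_mul (Real.rpow_nonneg hc.le r)]
  simp_rw [hpt]
  exact lintegral_const_mul _ (ENNReal.measurable_ofReal.comp (hu.abs.pow measurable_const))

end Stmt9Aux

open Stmt9Aux in

/-- Lemma 3.1, nonexistence. If `λ ≤ λ₁(s₂,q)` and `λ ≠ 0`, then `λ` is
not an eigenvalue of problem (1.1). -/
theorem stmt_9 (N : ℕ) (hN : 2 ≤ N) (Ω : Set (Euc N)) (hΩne : Ω.Nonempty)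
    (hΩo : IsOpen Ω) (hΩb : Bornology.IsBounded Ω) (s₁ s₂ p q : ℝ)
    (hs₁0 : 0 < s₁) (hs₁1 : s₁ < 1) (hs₂0 : 0 < s₂) (hs₂1 : s₂ < 1)
    (hp : 1 < p) (hq : 1 < q) (lam : ℝ)
    (hle : lam ≤ lam1 Ω s₂ q) (hne : lam ≠ 0) :
    ¬ IsEigen11 Ω s₁ s₂ p q lam := by
  rintro ⟨u, hX1, hX2, hune, heq⟩
  obtain ⟨hum, hfin1⟩ := hX1.imp id id
  obtain ⟨-, hfin2⟩ := hX2.imp id id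
  have hΩm := hΩo.measurableSet
  have hμΩfin : volume Ω < ⊤ := hΩb.measure_lt_top
  have hμΩpos : 0 < volume Ω := hΩo.measure_pos volume hΩne
  -- test v = 1
  have h1 := heq (fun _ => 1) (memX_const hΩo hΩb (by linarith) 1)
    (memX_const hΩo hΩb (by linarith) 1)
  rw [energyForm_const_right, energyForm_const_right, add_zero] at h1
  simp only [mul_one] at h1
  have hI : (∫ x in Ω, |u x| ^ (q - 2) * u x) = 0 :=
    (mul_eq_zero.mp h1.symm).resolve_left hne
  -- test v = u
  have h2 := heq u hX1 hX2
  rw [energyForm_self hum hp, energyForm_self hum hq] at h2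
  have hRHS : (∫ x in Ω, |u x| ^ (q - 2) * u x * u x) = ∫ x in Ω, |u x| ^ q :=
    integral_congr_ae (ae_of_all _ fun x => abs_rpow_identity (u x) hq)
  rw [hRHS] at h2
  set M : ℝ := ∫ x in Ω, |u x| ^ q with hMdef
  have hM0 : 0 ≤ M := integral_nonneg fun x => Real.rpow_nonneg (abs_nonneg _) q
  have hs1 : 0 ≤ semiPow Ω s₁ p u := ENNReal.toReal_nonneg
  have hs2 : 0 ≤ semiPow Ω s₂ q u := ENNReal.toReal_nonneg
  -- main claim : semiPow Ω s₁ p u = 0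
  have hkey : semiPow Ω s₁ p u = 0 := by
    rcases le_or_gt (lam * M) 0 with hlM | hlM
    · linarith
    · -- then M > 0 and lam > 0
      have hMpos : 0 < M := by
        rcases lt_or_eq_of_le hM0 with h | h
        · exact h
        · rw [← h] at hlM; simp at hlM
      have hlam : 0 < lam := by
        by_contra hcon
        push_neg at hcon
        nlinarith
      -- normalize
      set c : ℝ := M ^ (-(1 / q)) with hcdef
      have hc : 0 < c := Real.rpow_pos_of_pos hMpos _
      have hcq : c ^ q = M⁻¹ := by
        rw [hcdef, ← Real.rpow_mul hMpos.le]
        have : -(1 / q) * q = -1 := by field_simp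
        rw [this, Real.rpow_neg_one]
      set w : Euc N → ℝ := fun x => c * u x with hwdef
      have hwm : Measurable w := measurable_const.mul hum
      have hgw : gagliardo Ω s₂ q w = ENNReal.ofReal (c ^ q) * gagliardo Ω s₂ q u :=
        gagliardo_smul hum hc
      have hmemw : memX Ω s₂ q w := by
        refine ⟨hwm, ?_⟩
        rw [hgw, lint_smul hum hc, ← mul_add]
        exact ENNReal.mul_lt_top ENNReal.ofReal_lt_top hfin2
      have hIw : (∫ x in Ω, |w x| ^ (q - 2) * w x) = 0 := by
        have hpt : ∀ x, |w x| ^ (q - 2) * w x = (c ^ (q - 2) * c) * (|u x| ^ (q - 2) * u x) := by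
          intro x
          simp only [hwdef]
          rw [abs_mul, abs_of_pos hc, Real.mul_rpow hc.le (abs_nonneg _)]
          ring
        rw [integral_congr_ae (ae_of_all _ hpt), integral_const_mul, hI, mul_zero]
      have hMw : (∫ x in Ω, |w x| ^ q) = 1 := by
        have hpt : ∀ x, |w x| ^ q = c ^ q * |u x| ^ q := by
          intro x
          simp only [hwdef]
          rw [abs_mul, abs_of_pos hc, Real.mul_rpow hc.le (abs_nonneg _)]
        rw [integral_congr_ae (ae_of_all _ hpt), integral_const_mul, ← hMdef, hcq,
          inv_mul_cancel₀ hMpos.ne']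
      have hsemiw : semiPow Ω s₂ q w = M⁻¹ * semiPow Ω s₂ q u := by
        unfold semiPow
        rw [hgw, ENNReal.toReal_mul, ENNReal.toReal_ofReal (Real.rpow_nonneg hc.le q), hcq]
      have hbdd : BddBelow {t : ℝ | ∃ v : Euc N → ℝ, memX Ω s₂ q v ∧
          (∫ x in Ω, |v x| ^ (q - 2) * v x) = 0 ∧ (∫ x in Ω, |v x| ^ q) = 1 ∧
          t = semiPow Ω s₂ q v} :=
        ⟨0, by rintro t ⟨v, -, -, -, rfl⟩; exact ENNReal.toReal_nonneg⟩
      have hle2 : lam1 Ω s₂ q ≤ semiPow Ω s₂ q w := csInf_le hbdd ⟨w, hmemw, hIw, hMw, rfl⟩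
      have hfinal : lam * M ≤ semiPow Ω s₂ q u := by
        have hh := hle.trans hle2
        rw [hsemiw] at hh
        calc lam * M ≤ (M⁻¹ * semiPow Ω s₂ q u) * M := by nlinarith
          _ = semiPow Ω s₂ q u := by field_simp
      linarith
  -- conclude
  have hgag1 : gagliardo Ω s₁ p u = 0 := by
    have hfin : gagliardo Ω s₁ p u ≠ ⊤ :=
      (lt_of_le_of_lt (le_add_self) hfin1).ne
    rcases (ENNReal.toReal_eq_zero_iff _).mp hkey with h | h
    · exact h
    · exact absurd h hfin
  obtain ⟨cc, hcc⟩ := ae_const_of_gag_zero (by omega) hΩo hΩne hum hgag1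
  have hIc : (∫ x in Ω, |u x| ^ (q - 2) * u x) = (volume Ω).toReal • (|cc| ^ (q - 2) * cc) := by
    have hae : (fun x => |u x| ^ (q - 2) * u x)
        =ᵐ[volume.restrict Ω] (fun _ => |cc| ^ (q - 2) * cc) := by
      filter_upwards [ae_restrict_of_ae hcc] with x hx
      rw [hx]
    rw [integral_congr_ae hae, setIntegral_const, measureReal_def]
  have htR : 0 < (volume Ω).toReal := ENNReal.toReal_pos hμΩpos.ne' hμΩfin.ne
  have hcc0 : cc = 0 := by
    by_contra hcon
    have habs : 0 < |cc| ^ (q - 2) := Real.rpow_pos_of_pos (abs_pos.mpr hcon) _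
    have : (volume Ω).toReal • (|cc| ^ (q - 2) * cc) ≠ 0 := by
      simp only [smul_eq_mul]
      exact mul_ne_zero htR.ne' (mul_ne_zero habs.ne' hcon)
    exact this (hIc ▸ hI)
  exact hune (by rw [hcc0] at hcc; exact hcc)
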